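/- Let ψ₁ be a Schwartz function on ℝ with 0 ≤ ψ₁ ≤ 1 and support a compact subset of (0,1), let ψ(y) = ψ₁(y) − ψ₁(−y), and let Ψ(x,ξ₁,ξ₂,ξ₃) = ψ(x)ψ(ξ₂)ψ(ξ₃)ψ(ξ₁−ξ₂−2ξ₃). Let σ(y) = πi·sign(y) and σ_TH(x,ξ₁,ξ₂,ξ₃) = σ(ξ₁−ξ₂−2ξ₃). Then for all x, t₁, t₂, t₃, ξ₁, ξ₂, ξ₃, ν ∈ ℝ: |𝒱_Ψ σ_TH(x, t₁, t₂, t₃, ξ₁, ξ₂, ξ₃, ν)| = |ψ̂(ν)| · |ψ̂(t₁+t₂)| · |ψ̂(2t₁+t₃)| · |∫_ℝ σ(u) e^{2πi u t₁} ψ(u − (ξ₁−ξ₂−2ξ₃)) du|, where ψ̂(η) = ∫_ℝ ψ(y) e^{−2πi y η} dy. -/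

import Mathlib

/-!
Translating `x̃` pulls out `ψ̂(ν)` times a unimodular phase. In frequency, the shear
`ξ̃₁ ↦ ξ̃₁ + ξ̃₂ + 2ξ̃₃` turns `σ_TH · Ψ(· - ξ)` into a tensor product, so the integral splits into
the `σ`-integral and two translated Fourier integrals of `ψ`, evaluated at `-(t₁+t₂)` and
`-(2t₁+t₃)`; as `ψ` is odd, `|ψ̂(-η)| = |ψ̂(η)|`. Changes of variables along measure-preserving
maps and `integral_prod_mul` hold for Bochner integrals without any integrability assumption.
-/

open MeasureTheory Complex
open scoped ENNReal NNReal

noncomputable section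

/-- `e2pi a = e^{2πi a}`. -/
def e2pi (a : ℝ) : ℂ := Complex.exp (2 * Real.pi * Complex.I * (a : ℂ))

/-- Short-time Fourier transform on `ℝ`: `V_φ f (t, ν)`. -/
def STFT1 (φ f : ℝ → ℂ) (t ν : ℝ) : ℂ := ∫ y : ℝ, f y * e2pi (-(y * ν)) * φ (y - t)

/-- The Gaussian window `e^{-x²}` on `ℝ`. -/
def gauss1 : ℝ → ℂ := fun x => (Real.exp (-x ^ 2) : ℝ)

/-- `L^p`-type norm (`ℝ≥0∞`-valued) with essential supremum in case `p = ∞`. -/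
def eNorm {α : Type*} [MeasurableSpace α] (μ : Measure α) (p : ℝ≥0∞) (F : α → ℝ≥0∞) : ℝ≥0∞ :=
  if p = ∞ then essSup F μ else (∫⁻ a, F a ^ p.toReal ∂μ) ^ (1 / p.toReal)

/-- Modulation space norm `‖f‖_{M^{p,q}}` on `ℝ` with the Gaussian window. -/
def modNorm1 (p q : ℝ≥0∞) (f : ℝ → ℂ) : ℝ≥0∞ :=
  eNorm volume q fun ν => eNorm volume p fun t => (‖STFT1 gauss1 f t ν‖₊ : ℝ≥0∞)

/-- Fourier transform on `ℝ`. -/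
def FT1 (f : ℝ → ℂ) (ξ : ℝ) : ℂ := ∫ y : ℝ, f y * e2pi (-(y * ξ))

/-- Symbol short-time Fourier transform of a symbol on `ℝ³`. -/
def symbSTFT3 (Ψ σ : ℝ × ℝ × ℝ → ℂ) (x t₁ t₂ ξ₁ ξ₂ ν : ℝ) : ℂ :=
  ∫ X : ℝ × ℝ × ℝ, σ X * Ψ (X.1 - x, X.2.1 - ξ₁, X.2.2 - ξ₂) *
    e2pi (-(X.1 * ν - t₁ * X.2.1 - t₂ * X.2.2))

/-- Symbol short-time Fourier transform of a symbol on `ℝ⁴`. -/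
def symbSTFT4 (Ψ σ : ℝ × ℝ × ℝ × ℝ → ℂ) (x t₁ t₂ t₃ ξ₁ ξ₂ ξ₃ ν : ℝ) : ℂ :=
  ∫ X : ℝ × ℝ × ℝ × ℝ, σ X * Ψ (X.1 - x, X.2.1 - ξ₁, X.2.2.1 - ξ₂, X.2.2.2 - ξ₃) *
    e2pi (-(X.1 * ν - t₁ * X.2.1 - t₂ * X.2.2.1 - t₃ * X.2.2.2))

/-- The bilinear Hilbert transform as an (absolutely convergent) bilinear Fourier
multiplier for Schwartz functions. -/
def BH (f g : ℝ → ℂ) (x : ℝ) : ℂ :=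
  ∫ ξ : ℝ × ℝ, (-(Real.pi : ℂ) * Complex.I * (Real.sign (ξ.1 - ξ.2) : ℝ)) *
    FT1 f ξ.1 * FT1 g ξ.2 * e2pi (x * (ξ.1 + ξ.2))

/-- The trilinear Hilbert transform as an (absolutely convergent) trilinear Fourier
multiplier for Schwartz functions. -/
def TH (f g h : ℝ → ℂ) (x : ℝ) : ℂ :=
  ∫ ξ : ℝ × ℝ × ℝ, ((Real.pi : ℂ) * Complex.I * (Real.sign (ξ.1 - ξ.2.1 - 2 * ξ.2.2) : ℝ)) *
    FT1 f ξ.1 * FT1 g ξ.2.1 * FT1 h ξ.2.2 * e2pi (x * (ξ.1 + ξ.2.1 + ξ.2.2))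

lemma e2pi_add (a b : ℝ) : e2pi (a + b) = e2pi a * e2pi b := by
  rw [e2pi, e2pi, e2pi, ← Complex.exp_add]
  push_cast
  ring_nf

lemma norm_e2pi (a : ℝ) : ‖e2pi a‖ = 1 := by
  rw [e2pi, Complex.norm_exp]
  norm_num [Complex.mul_re, Complex.mul_im]

lemma FT1_comp_sub (f : ℝ → ℂ) (a ξ : ℝ) :
    FT1 (fun y => f (y - a)) ξ = e2pi (-(a * ξ)) * FT1 f ξ := by
  rw [FT1, FT1, ← integral_add_right_eq_self _ a, ← integral_const_mul]
  congr 1 with y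
  rw [add_sub_cancel_right, show -((y + a) * ξ) = -(y * ξ) + -(a * ξ) by ring, e2pi_add]
  ring

lemma FT1_neg_of_odd {f : ℝ → ℂ} (hf : f.Odd) (ξ : ℝ) :
    FT1 f (-ξ) = -FT1 f ξ := by
  rw [FT1, FT1, ← integral_neg_eq_self, ← integral_neg]
  congr 1 with y
  rw [hf, neg_mul, mul_neg, neg_mul, neg_neg]

namespace MeasureTheory

variable {G E F : Type*} [MeasurableSpace G] [AddGroup G] [MeasurableAdd₂ G] [MeasurableNeg G]
  [MeasurableSpace E] [NormedAddCommGroup F] [NormedSpace ℝ F]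

theorem integral_prod_comp_add_fst (μ : Measure G) [SFinite μ] [μ.IsAddRightInvariant]
    (ν : Measure E) [SFinite ν] {g : E → G} (hg : Measurable g) (f : G × E → F) :
    ∫ z, f (z.1 + g z.2, z.2) ∂μ.prod ν = ∫ z, f z ∂μ.prod ν := by
  let e : E × G ≃ᵐ E × G :=
    { toEquiv := .prodShear (.refl E) fun y => Equiv.addRight (g y)
      measurable_toFun := measurable_fst.prodMk (measurable_snd.add (hg.comp measurable_fst))
      measurable_invFun := measurable_fst.prodMk (measurable_snd.add (hg.comp measurable_fst).neg) }
  have he : MeasurePreserving e (ν.prod μ) (ν.prod μ) :=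
    (MeasurePreserving.id ν).skew_product (g := fun y x => x + g y)
      (measurable_snd.add (hg.comp measurable_fst))
      (ae_of_all _ fun y => map_add_right_eq_self μ (g y))
  rw [← integral_prod_swap, ← integral_prod_swap f]
  exact he.integral_comp' fun z => f z.swap

end MeasureTheory

theorem symbSTFT4_factorization (ψ σ : ℝ → ℂ) (x t₁ t₂ t₃ ξ₁ ξ₂ ξ₃ ν : ℝ) :
    symbSTFT4 (fun X => ψ X.1 * ψ X.2.2.1 * ψ X.2.2.2 * ψ (X.2.1 - X.2.2.1 - 2 * X.2.2.2))
        (fun X => σ (X.2.1 - X.2.2.1 - 2 * X.2.2.2)) x t₁ t₂ t₃ ξ₁ ξ₂ ξ₃ ν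
      = FT1 (fun a => ψ (a - x)) ν *
        ((∫ u : ℝ, σ u * e2pi (u * t₁) * ψ (u - (ξ₁ - ξ₂ - 2 * ξ₃))) *
          (FT1 (fun a => ψ (a - ξ₂)) (-(t₁ + t₂)) *
            FT1 (fun b => ψ (b - ξ₃)) (-(2 * t₁ + t₃)))) := by
  set B : ℝ × ℝ × ℝ → ℂ := fun Y =>
    σ (Y.1 - Y.2.1 - 2 * Y.2.2) * ψ (Y.1 - Y.2.1 - 2 * Y.2.2 - (ξ₁ - ξ₂ - 2 * ξ₃)) *
      ψ (Y.2.1 - ξ₂) * ψ (Y.2.2 - ξ₃) * e2pi (t₁ * Y.1 + t₂ * Y.2.1 + t₃ * Y.2.2)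
  set C : ℝ → ℂ := fun u => σ u * e2pi (u * t₁) * ψ (u - (ξ₁ - ξ₂ - 2 * ξ₃))
  set D : ℝ → ℂ := fun a => ψ (a - ξ₂) * e2pi (-(a * -(t₁ + t₂)))
  set E : ℝ → ℂ := fun b => ψ (b - ξ₃) * e2pi (-(b * -(2 * t₁ + t₃)))
  have hsplit : symbSTFT4 (fun X => ψ X.1 * ψ X.2.2.1 * ψ X.2.2.2 *
        ψ (X.2.1 - X.2.2.1 - 2 * X.2.2.2)) (fun X => σ (X.2.1 - X.2.2.1 - 2 * X.2.2.2))
        x t₁ t₂ t₃ ξ₁ ξ₂ ξ₃ ν = FT1 (fun a => ψ (a - x)) ν * ∫ Y, B Y := by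
    rw [FT1, ← integral_prod_mul, symbSTFT4]
    congr 1 with X
    rw [show -(X.1 * ν - t₁ * X.2.1 - t₂ * X.2.2.1 - t₃ * X.2.2.2)
        = -(X.1 * ν) + (t₁ * X.2.1 + t₂ * X.2.2.1 + t₃ * X.2.2.2) by ring, e2pi_add,
      show X.2.1 - ξ₁ - (X.2.2.1 - ξ₂) - 2 * (X.2.2.2 - ξ₃)
        = X.2.1 - X.2.2.1 - 2 * X.2.2.2 - (ξ₁ - ξ₂ - 2 * ξ₃) by ring]
    ring
  have hshear : ∫ Y, B Y = ∫ z : ℝ × ℝ × ℝ, C z.1 * (D z.2.1 * E z.2.2) := by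
    rw [Measure.volume_eq_prod, ← integral_prod_comp_add_fst volume volume
      (g := fun y : ℝ × ℝ => y.1 + 2 * y.2) (by fun_prop)]
    congr 1 with z
    simp only [B, C, D, E, mul_neg, neg_neg]
    rw [show z.1 + (z.2.1 + 2 * z.2.2) - z.2.1 - 2 * z.2.2 = z.1 by ring,
      show t₁ * (z.1 + (z.2.1 + 2 * z.2.2)) + t₂ * z.2.1 + t₃ * z.2.2
        = z.1 * t₁ + (z.2.1 * (t₁ + t₂) + z.2.2 * (2 * t₁ + t₃)) by ring, e2pi_add, e2pi_add]
    ring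
  rw [hsplit, hshear]
  exact congrArg _ <| (integral_prod_mul C fun y : ℝ × ℝ => D y.1 * E y.2).trans
    (congrArg _ (integral_prod_mul D E))

theorem stmt17_general (ψ₁ : SchwartzMap ℝ ℝ)
    (ψ : ℝ → ℂ) (hψ : ψ = fun y => ((ψ₁ y - ψ₁ (-y) : ℝ) : ℂ))
    (Ψ : ℝ × ℝ × ℝ × ℝ → ℂ)
    (hΨ : Ψ = fun X => ψ X.1 * ψ X.2.2.1 * ψ X.2.2.2 * ψ (X.2.1 - X.2.2.1 - 2 * X.2.2.2))
    (σ : ℝ → ℂ)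
    (σTH : ℝ × ℝ × ℝ × ℝ → ℂ) (hσTH : σTH = fun X => σ (X.2.1 - X.2.2.1 - 2 * X.2.2.2))
    (x t₁ t₂ t₃ ξ₁ ξ₂ ξ₃ ν : ℝ) :
    ‖symbSTFT4 Ψ σTH x t₁ t₂ t₃ ξ₁ ξ₂ ξ₃ ν‖
      = ‖∫ y : ℝ, ψ y * e2pi (-(y * ν))‖ *
        ‖∫ y : ℝ, ψ y * e2pi (-(y * (t₁ + t₂)))‖ *
        ‖∫ y : ℝ, ψ y * e2pi (-(y * (2 * t₁ + t₃)))‖ *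
        ‖∫ u : ℝ, σ u * e2pi (u * t₁) * ψ (u - (ξ₁ - ξ₂ - 2 * ξ₃))‖ := by
  have hodd : ψ.Odd := fun y => by
    simp only [hψ, neg_neg]
    push_cast
    ring
  subst hΨ hσTH
  rw [symbSTFT4_factorization, FT1_comp_sub, FT1_comp_sub, FT1_comp_sub, FT1_neg_of_odd hodd,
    FT1_neg_of_odd hodd]
  simp only [FT1, norm_mul, norm_neg, norm_e2pi, one_mul]
  ring

/-- factorization of the symbol STFT of the trilinear Hilbert transform
symbol `σ_TH(x,ξ₁,ξ₂,ξ₃) = πi·sign(ξ₁−ξ₂−2ξ₃)` with respect to the window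
`Ψ(x,ξ₁,ξ₂,ξ₃) = ψ(x)ψ(ξ₂)ψ(ξ₃)ψ(ξ₁−ξ₂−2ξ₃)`. -/
theorem stmt17 (ψ₁ : SchwartzMap ℝ ℝ)
    (hpos : ∀ y, 0 ≤ ψ₁ y) (hle : ∀ y, ψ₁ y ≤ 1)
    (hsupp : tsupport (⇑ψ₁) ⊆ Set.Ioo 0 1)
    (ψ : ℝ → ℂ) (hψ : ψ = fun y => ((ψ₁ y - ψ₁ (-y) : ℝ) : ℂ))
    (Ψ : ℝ × ℝ × ℝ × ℝ → ℂ)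
    (hΨ : Ψ = fun X => ψ X.1 * ψ X.2.2.1 * ψ X.2.2.2 * ψ (X.2.1 - X.2.2.1 - 2 * X.2.2.2))
    (σ : ℝ → ℂ) (hσ : σ = fun y => (Real.pi : ℂ) * Complex.I * (Real.sign y : ℝ))
    (σTH : ℝ × ℝ × ℝ × ℝ → ℂ) (hσTH : σTH = fun X => σ (X.2.1 - X.2.2.1 - 2 * X.2.2.2))
    (x t₁ t₂ t₃ ξ₁ ξ₂ ξ₃ ν : ℝ) :
    ‖symbSTFT4 Ψ σTH x t₁ t₂ t₃ ξ₁ ξ₂ ξ₃ ν‖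
      = ‖∫ y : ℝ, ψ y * e2pi (-(y * ν))‖ *
        ‖∫ y : ℝ, ψ y * e2pi (-(y * (t₁ + t₂)))‖ *
        ‖∫ y : ℝ, ψ y * e2pi (-(y * (2 * t₁ + t₃)))‖ *
        ‖∫ u : ℝ, σ u * e2pi (u * t₁) * ψ (u - (ξ₁ - ξ₂ - 2 * ξ₃))‖ :=
  stmt17_general ψ₁ ψ hψ Ψ hΨ σ σTH hσTH x t₁ t₂ t₃ ξ₁ ξ₂ ξ₃ ν

end
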